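/- Let G = ⟨a,b | a^{11} = b^2 = 1, bab^{-1} = a^{-1}⟩ be the dihedral group of order 22 and let S = {b, a^2 b, a^6 b, a^7 b, a^8 b, a^{10} b}. Then the Cayley graph Γ = Cay(G,S) (the graph 𝒢_{22,6}) is distance transitive, has diameter 3, and has intersection array {6,5,3;1,3,6}: for all vertices u,v with d_Γ(u,v) = i (0 ≤ i ≤ 3), the number of neighbors w of v with d_Γ(u,w) = i+1 equals b_i and the number of neighbors w of v with d_Γ(u,w) = i−1 equals c_i, where (b_0,b_1,b_2,b_3) = (6,5,3,0) and (c_0,c_1,c_2,c_3) = (0,1,3,6). -/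

import Mathlib

/-!
Right multiplications are automorphisms of a Cayley graph, so only the spheres around `1` matter.
An explicit breadth-first labelling `g226Level` shows they are `{1}`, the six reflections `sr i`
with `i ∈ {0, 1, 3, 4, 5, 9}`, the ten nontrivial rotations, and the other five reflections.
The stabiliser of `1` contains the multiplier `i ↦ 3i`, whose orbits on each sphere are `{1}`,
`{sr 0}` and the nonzero squares resp. non-squares, and an involution swapping `sr 0 ↔ sr 1`
and `r 1 ↔ r 6`, which fuses these orbits; so the stabiliser is transitive on every sphere.
Distance transitivity then makes the intersection numbers depend on `d(u, v)` only, and they are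
counted at one representative per sphere.
-/

open SimpleGraph DihedralGroup

/-- The generator `a = r 1` of rotations in the dihedral group of order 22. -/
def dihA : DihedralGroup 11 := DihedralGroup.r 1

/-- The reflection `b = sr 0` in the dihedral group of order 22. -/
def dihB : DihedralGroup 11 := DihedralGroup.sr 0

/-- The connection set `S = {b, a²b, a⁶b, a⁷b, a⁸b, a¹⁰b}`. -/
def g226S : Finset (DihedralGroup 11) :=
  {dihB, dihA ^ 2 * dihB, dihA ^ 6 * dihB, dihA ^ 7 * dihB, dihA ^ 8 * dihB,
    dihA ^ 10 * dihB}

/-- The graph `𝒢_{22,6}`: the Cayley graph `Cay(G, S)` of the dihedral group `G` of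
order `22` with respect to `S = {b, a²b, a⁶b, a⁷b, a⁸b, a¹⁰b}`. -/
def g226 : SimpleGraph (DihedralGroup 11) where
  Adj x y := y * x⁻¹ ∈ g226S
  symm := by
    have h : ∀ x y : DihedralGroup 11, y * x⁻¹ ∈ g226S → x * y⁻¹ ∈ g226S := by decide
    exact ⟨fun x y hxy => h x y hxy⟩
  loopless := by
    have h : ∀ x : DihedralGroup 11, ¬ x * x⁻¹ ∈ g226S := by decide
    exact ⟨h⟩

variable {V : Type*}

/-- The automorphism group of a simple graph, as a subgroup of the permutation
group of the vertex set. -/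
def SimpleGraph.autGroup (Γ : SimpleGraph V) : Subgroup (Equiv.Perm V) where
  carrier := {f | ∀ u v : V, Γ.Adj (f u) (f v) ↔ Γ.Adj u v}
  one_mem' := by intro u v; simp
  mul_mem' := by
    intro f g hf hg u v
    simp only [Equiv.Perm.mul_apply]
    rw [hf, hg]
  inv_mem' := by
    intro f hf u v
    have h := hf (f⁻¹ u) (f⁻¹ v)
    simpa using h.symm


namespace SimpleGraph

variable {Γ : SimpleGraph V}

def IsDistanceTransitive (Γ : SimpleGraph V) : Prop :=
  ∀ u v x y : V, Γ.dist u v = Γ.dist x y → ∃ g ∈ Γ.autGroup, g u = x ∧ g v = y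

lemma edist_map_le {W : Type*} {Γ' : SimpleGraph W} (φ : Γ →g Γ') (u v : V) :
    Γ'.edist (φ u) (φ v) ≤ Γ.edist u v :=
  le_iInf fun p => (edist_le (p.map φ)).trans (by simp)

lemma dist_apply_of_mem_autGroup {f : Equiv.Perm V} (hf : f ∈ Γ.autGroup) (u v : V) :
    Γ.dist (f u) (f v) = Γ.dist u v := by
  have hle : ∀ g ∈ Γ.autGroup, ∀ u v, Γ.edist (g u) (g v) ≤ Γ.edist u v :=
    fun g hg u v => edist_map_le ⟨g, (hg _ _).2⟩ u v
  have hge := hle f⁻¹ (inv_mem hf) (f u) (f v)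
  simp only [← Equiv.Perm.mul_apply, inv_mul_cancel, Equiv.Perm.one_apply] at hge
  exact congrArg ENat.toNat (le_antisymm (hle f hf u v) hge)

lemma IsDistanceTransitive.card_adj_dist_eq (hΓ : Γ.IsDistanceTransitive) {u v x y : V}
    (h : Γ.dist u v = Γ.dist x y) (k : ℕ) :
    Nat.card {w | Γ.Adj v w ∧ Γ.dist u w = k} =
      Nat.card {w | Γ.Adj y w ∧ Γ.dist x w = k} := by
  obtain ⟨g, hg, rfl, rfl⟩ := hΓ u v x y h
  refine Nat.card_congr (g.subtypeEquiv fun w => ?_)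
  rw [Set.mem_ofPred_eq, Set.mem_ofPred_eq, hg, dist_apply_of_mem_autGroup hg]

structure IsDistLabelling (Γ : SimpleGraph V) (u : V) (f : V → ℕ) : Prop where
  eq_zero_iff : ∀ v, f v = 0 ↔ v = u
  le_succ_of_adj : ∀ v w, Γ.Adj v w → f w ≤ f v + 1
  exists_adj_succ_eq : ∀ v, 0 < f v → ∃ w, Γ.Adj w v ∧ f w + 1 = f v

namespace IsDistLabelling

variable {u : V} {f : V → ℕ}

lemma le_add_length (hf : Γ.IsDistLabelling u f) {v w : V} (p : Γ.Walk v w) :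
    f v ≤ f w + p.length := by
  induction p with
  | nil => simp
  | cons h _ ih =>
    have := hf.le_succ_of_adj _ _ h.symm
    simp only [Walk.length_cons]
    omega

lemma exists_walk_length_eq (hf : Γ.IsDistLabelling u f) (v : V) :
    ∃ p : Γ.Walk u v, p.length = f v := by
  induction hv : f v generalizing v with
  | zero => obtain rfl := (hf.eq_zero_iff v).1 hv; exact ⟨.nil, rfl⟩
  | succ n ih =>
    obtain ⟨w, hwv, hw⟩ := hf.exists_adj_succ_eq v (by omega)
    obtain ⟨p, hp⟩ := ih w (by omega)
    exact ⟨p.concat hwv, by rw [Walk.length_concat, hp]⟩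

lemma reachable (hf : Γ.IsDistLabelling u f) (v : V) : Γ.Reachable u v :=
  (hf.exists_walk_length_eq v).elim fun p _ => p.reachable

lemma dist_eq (hf : Γ.IsDistLabelling u f) (v : V) : Γ.dist u v = f v := by
  obtain ⟨p, hp⟩ := hf.exists_walk_length_eq v
  obtain ⟨q, hq⟩ := p.reachable.exists_walk_length_eq_dist
  have hfv := hf.le_add_length q.reverse
  rw [Walk.length_reverse, (hf.eq_zero_iff u).2 rfl] at hfv
  exact le_antisymm (hp ▸ dist_le p) (by omega)

end IsDistLabelling

section Group

variable {G : Type*} [Group G] {Γ : SimpleGraph G}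

lemma dist_eq_dist_one_mul_inv (hmul : ∀ g, Equiv.mulRight g ∈ Γ.autGroup) (u v : G) :
    Γ.dist u v = Γ.dist 1 (v * u⁻¹) := by
  simpa using (dist_apply_of_mem_autGroup (hmul u⁻¹) u v).symm

lemma isDistanceTransitive_of_stabilizer (hmul : ∀ g, Equiv.mulRight g ∈ Γ.autGroup)
    (hstab : ∀ w z, Γ.dist 1 w = Γ.dist 1 z → ∃ σ ∈ Γ.autGroup, σ 1 = 1 ∧ σ w = z) :
    Γ.IsDistanceTransitive := by
  intro u v x y h
  rw [dist_eq_dist_one_mul_inv hmul, dist_eq_dist_one_mul_inv hmul x] at h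
  obtain ⟨σ, hσ, hσ1, hσv⟩ := hstab _ _ h
  refine ⟨Equiv.mulRight x * σ * Equiv.mulRight u⁻¹,
    mul_mem (mul_mem (hmul x) hσ) (hmul u⁻¹), ?_, ?_⟩
  · simp [hσ1]
  · simp [hσv]

end Group

end SimpleGraph

namespace DihedralGroup

variable {n : ℕ}

def scale (k : (ZMod n)ˣ) : DihedralGroup n ≃* DihedralGroup n where
  toFun
    | r i => r (k * i)
    | sr i => sr (k * i)
  invFun
    | r i => r (↑k⁻¹ * i)
    | sr i => sr (↑k⁻¹ * i)
  left_inv := by rintro (i | i) <;> simp [← mul_assoc]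
  right_inv := by rintro (i | i) <;> simp [← mul_assoc]
  map_mul' := by rintro (i | i) (j | j) <;> simp [mul_add, mul_sub]

end DihedralGroup

instance : DecidableRel g226.Adj := fun x y => inferInstanceAs (Decidable (y * x⁻¹ ∈ g226S))

lemma mulRight_mem_g226_autGroup (g : DihedralGroup 11) : Equiv.mulRight g ∈ g226.autGroup := by
  intro u v
  show v * g * (u * g)⁻¹ ∈ g226S ↔ v * u⁻¹ ∈ g226S
  simp [mul_assoc]

lemma mulEquiv_mem_g226_autGroup (φ : DihedralGroup 11 ≃* DihedralGroup 11)
    (hφ : ∀ s, φ s ∈ g226S ↔ s ∈ g226S) : φ.toEquiv ∈ g226.autGroup := by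
  intro u v
  show φ v * (φ u)⁻¹ ∈ g226S ↔ v * u⁻¹ ∈ g226S
  rw [← map_inv, ← map_mul, hφ]

/-- Since `aᵏb = sr (-k)`, the neighbours of `1` are the `sr i` with `i ∈ {0, 1, 3, 4, 5, 9}`,
i.e. `i` zero or a nonzero square mod `11`. -/
def g226Level : DihedralGroup 11 → ℕ
  | r i => if i = 0 then 0 else 2
  | sr i => if i ∈ ({0, 1, 3, 4, 5, 9} : Finset (ZMod 11)) then 1 else 3

lemma g226Level_isDistLabelling : g226.IsDistLabelling 1 g226Level :=
  ⟨by decide, by decide, by decide⟩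

lemma dist_one_g226 (w : DihedralGroup 11) : g226.dist 1 w = g226Level w :=
  g226Level_isDistLabelling.dist_eq w

lemma g226_connected : g226.Connected :=
  .mk fun v w =>
    (g226Level_isDistLabelling.reachable v).symm.trans (g226Level_isDistLabelling.reachable w)

lemma g226_diam : g226.diam = 3 := by
  obtain ⟨u, v, huv⟩ := g226.exists_dist_eq_diam
  refine le_antisymm ?_ ?_
  · rw [← huv, dist_eq_dist_one_mul_inv mulRight_mem_g226_autGroup, dist_one_g226]
    generalize v * u⁻¹ = w
    revert w
    decide
  · calc 3 = g226.dist 1 (sr 2) := by rw [dist_one_g226]; rfl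
      _ ≤ g226.diam := dist_le_diam (connected_iff_ediam_ne_top.1 g226_connected)

def g226Scale3 : Equiv.Perm (DihedralGroup 11) :=
  (DihedralGroup.scale ⟨3, 4, rfl, rfl⟩).toEquiv

/-- An automorphism of `g226` fixing `1` that is not a multiplier, found by computer search. -/
def g226Flip : Equiv.Perm (DihedralGroup 11) :=
  Function.Involutive.toPerm
    (fun
      | r i => r (![0, 6, 9, 10, 4, 5, 1, 8, 7, 2, 3] i)
      | sr i => sr (![1, 0, 7, 3, 4, 9, 10, 2, 8, 5, 6] i))
    (by unfold Function.Involutive; decide)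

def g226Stab : Subgroup (Equiv.Perm (DihedralGroup 11)) :=
  Subgroup.closure {g226Scale3, g226Flip}

lemma g226Stab_le :
    g226Stab ≤ g226.autGroup ⊓ MulAction.stabilizer _ (1 : DihedralGroup 11) := by
  rw [g226Stab, Subgroup.closure_le]
  rintro σ (rfl | rfl) <;> refine ⟨?_, rfl⟩
  · exact mulEquiv_mem_g226_autGroup _ (by decide)
  · show ∀ u v, g226.Adj (g226Flip u) (g226Flip v) ↔ g226.Adj u v
    decide

def sphereRep : ℕ → DihedralGroup 11
  | 0 => 1
  | 1 => sr 0
  | 2 => r 1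
  | _ => sr 2

lemma exists_mem_g226Stab_apply_eq_sphereRep (w : DihedralGroup 11) :
    ∃ σ ∈ g226Stab, σ w = sphereRep (g226Level w) := by
  have hμ : g226Scale3 ∈ g226Stab := Subgroup.subset_closure (by simp)
  have hτ : g226Flip ∈ g226Stab := Subgroup.subset_closure (by simp)
  have key : ∀ w, ∃ j : Fin 5, (g226Scale3 ^ (j : ℕ)) w = sphereRep (g226Level w) ∨
      g226Flip ((g226Scale3 ^ (j : ℕ)) w) = sphereRep (g226Level w) := by
    decide
  obtain ⟨j, h | h⟩ := key w
  · exact ⟨_, pow_mem hμ _, h⟩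
  · exact ⟨g226Flip * g226Scale3 ^ (j : ℕ), mul_mem hτ (pow_mem hμ _), h⟩

lemma g226_stabilizer_transitive_on_spheres (w z : DihedralGroup 11)
    (h : g226.dist 1 w = g226.dist 1 z) :
    ∃ σ ∈ g226.autGroup, σ 1 = 1 ∧ σ w = z := by
  rw [dist_one_g226, dist_one_g226] at h
  obtain ⟨σ, hσ, hσw⟩ := exists_mem_g226Stab_apply_eq_sphereRep w
  obtain ⟨τ, hτ, hτz⟩ := exists_mem_g226Stab_apply_eq_sphereRep z
  obtain ⟨haut, hfix⟩ := g226Stab_le (mul_mem (inv_mem hτ) hσ)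
  refine ⟨τ⁻¹ * σ, haut, hfix, ?_⟩
  rw [Equiv.Perm.mul_apply, Equiv.Perm.inv_eq_iff_eq, hσw, hτz, h]

lemma g226_isDistanceTransitive : g226.IsDistanceTransitive :=
  isDistanceTransitive_of_stabilizer mulRight_mem_g226_autGroup
    g226_stabilizer_transitive_on_spheres

lemma card_adj_level_sphereRep : ∀ i : Fin 4,
    Nat.card {w | g226.Adj (sphereRep i) w ∧ g226Level w = (i : ℕ) + 1} = ![6, 5, 3, 0] i ∧
    Nat.card {w | g226.Adj (sphereRep i) w ∧ g226Level w = (i : ℕ) - 1} = ![0, 1, 3, 6] i := by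
  simp only [Nat.card_eq_fintype_card]
  decide

/-- The Cayley graph `𝒢_{22,6} = Cay(G, S)` of the dihedral group
of order `22` with `S = {b, a²b, a⁶b, a⁷b, a⁸b, a¹⁰b}` is distance transitive, has
diameter `3`, and has intersection array `{6,5,3;1,3,6}`: whenever `d(u,v) = i`
(`0 ≤ i ≤ 3`), the number of neighbours of `v` at distance `i+1` from `u` is `bᵢ`
and the number of neighbours of `v` at distance `i-1` from `u` is `cᵢ`, where
`(b₀,b₁,b₂,b₃) = (6,5,3,0)` and `(c₀,c₁,c₂,c₃) = (0,1,3,6)`. -/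
theorem g226_distance_transitive_intersection_array :
    (∀ u v x y : DihedralGroup 11, g226.dist u v = g226.dist x y →
      ∃ g ∈ g226.autGroup, g u = x ∧ g v = y) ∧
    g226.diam = 3 ∧
    ∀ u v : DihedralGroup 11, ∀ i : Fin 4, g226.dist u v = (i : ℕ) →
      Nat.card {w : DihedralGroup 11 |
          g226.Adj v w ∧ g226.dist u w = (i : ℕ) + 1} = ![6, 5, 3, 0] i ∧
      Nat.card {w : DihedralGroup 11 |
          g226.Adj v w ∧ g226.dist u w = (i : ℕ) - 1} = ![0, 1, 3, 6] i := by
  refine ⟨g226_isDistanceTransitive, g226_diam, fun u v i h => ?_⟩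
  have hrep : g226.dist u v = g226.dist 1 (sphereRep i) := by
    rw [h, dist_one_g226]
    fin_cases i <;> rfl
  simp only [g226_isDistanceTransitive.card_adj_dist_eq hrep, dist_one_g226]
  exact card_adj_level_sphereRep i
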